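/- With A, b, σ, β as above, the function g₂(μ) = -μ/g(μ) is monotonically decreasing on (μ*, β], where g(μ) = ‖(A-μI)⁻¹b‖₁ - μ. -/

import Mathlib

/-!
Put `t = 2 - σ - μ`, so that `A - μ = t - M` and `g(μ) + μ = F(t) := 𝟙ᵀ (t - M)⁻¹ b`.
For `t > σ ≥ ‖Mᵀ‖_∞` the Neumann series `(t - M)⁻¹ = ∑ t⁻ᵏ⁻¹ Mᵏ` shows that the resolvent is
entrywise nonnegative, and `𝟙ᵀ (t - M) ≥ (t - σ) 𝟙ᵀ` bounds its column sums by `1 / (t - σ)`.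
The resolvent identity `F(t) - F(s) = (s - t) 𝟙ᵀ (t - M)⁻¹ (s - M)⁻¹ b` then shows that `F` is
antitone and `(t - σ) F(t)` is monotone on `(σ, ∞)`. Back in `μ`, with `f = g + id`: `f` is
monotone and `(2β - μ) f(μ)` antitone on `μ ≤ β`; as `μ₁ + μ₂ ≤ 2β` these give
`μ₁ f(μ₂) ≤ μ₂ f(μ₁)` for `μ₁ ≤ μ₂`, which is the antitonicity of `μ / (μ - f(μ))` where `g < 0`.
-/

open Matrix Set

/-- ℓ¹ norm of a vector in ℝⁿ. -/
noncomputable def l1 {n : ℕ} (x : Fin n → ℝ) : ℝ := ∑ i, |x i|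

/-- Induced operator 1-norm of a real matrix (maximum column sum). -/
noncomputable def op1 {n : ℕ} (A : Matrix (Fin n) (Fin n) ℝ) : ℝ := ⨆ j, ∑ i, |A i j|

namespace Matrix

lemma mulVec_apply_nonneg {m n R : Type*} [Fintype n] [Semiring R] [PartialOrder R]
    [IsOrderedRing R] {A : Matrix m n R} (hA : ∀ i j, 0 ≤ A i j) {x : n → R}
    (hx : ∀ j, 0 ≤ x j) (i : m) : 0 ≤ (A *ᵥ x) i :=
  Finset.sum_nonneg fun j _ => mul_nonneg (hA i j) (hx j)

variable {ι : Type*} [Fintype ι] [DecidableEq ι]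

section LinftyOpNorm

attribute [local instance] Matrix.linftyOpNormedRing Matrix.linftyOpNormedAlgebra

lemma linfty_opNorm_le_of_sum_le {M : Matrix ι ι ℝ} {σ : ℝ} (hM : ∀ i j, 0 ≤ M i j)
    (hσ : 0 ≤ σ) (hrow : ∀ i, ∑ j, M i j ≤ σ) : ‖M‖ ≤ σ := by
  lift σ to NNReal using hσ
  rw [linfty_opNorm_def, NNReal.coe_le_coe]
  refine Finset.sup_le fun i _ => ?_
  rw [← NNReal.coe_le_coe]
  push_cast
  simpa [Real.norm_eq_abs, abs_of_nonneg (hM i _)] using hrow i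

lemma inv_one_sub_apply_nonneg {P : Matrix ι ι ℝ} (hP : ∀ i j, 0 ≤ P i j) (h : ‖P‖ < 1)
    (i j : ι) : 0 ≤ (1 - P)⁻¹ i j := by
  have hsum : HasSum (fun k => P ^ k) (1 - P)⁻¹ := by
    rw [nonsing_inv_eq_ringInverse]
    exact hasSum_geom_series_inverse P h
  exact (Pi.hasSum.1 (Pi.hasSum.1 hsum i) j).nonneg fun k => pow_apply_nonneg hP k i j

lemma isUnit_det_smul_one_sub_and_inv_apply_nonneg {M : Matrix ι ι ℝ} {σ t : ℝ}
    (hM : ∀ i j, 0 ≤ M i j) (hσ : 0 ≤ σ) (hcol : ∀ j, ∑ i, M i j ≤ σ) (ht : σ < t) :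
    IsUnit (t • 1 - M).det ∧ ∀ i j, 0 ≤ (t • 1 - M)⁻¹ i j := by
  have ht0 : 0 < t := hσ.trans_lt ht
  set P := t⁻¹ • Mᵀ
  have hP : ∀ i j, 0 ≤ P i j := fun i j => mul_nonneg (inv_nonneg.2 ht0.le) (hM j i)
  have hPnorm : ‖P‖ < 1 := calc
    ‖P‖ = t⁻¹ * ‖Mᵀ‖ := by rw [norm_smul, Real.norm_of_nonneg (inv_nonneg.2 ht0.le)]
    _ ≤ t⁻¹ * σ := by
      gcongr
      exact linfty_opNorm_le_of_sum_le (fun i j => hM j i) hσ hcol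
    _ < 1 := by rwa [inv_mul_lt_iff₀ ht0, mul_one]
  have hT : (t • 1 - M)ᵀ = t • (1 - P) := by
    simp [P, smul_sub, smul_smul, ht0.ne']
  have hdet : IsUnit (1 - P).det :=
    (isUnit_iff_isUnit_det _).1 (isUnit_one_sub_of_norm_lt_one hPnorm)
  let := invertibleOfNonzero ht0.ne'
  refine ⟨?_, fun i j => ?_⟩
  · rw [← det_transpose, hT, det_smul]
    exact ((isUnit_of_invertible t).pow _).mul hdet
  · rw [← transpose_apply (t • 1 - M)⁻¹ j i, transpose_nonsing_inv, hT,
      Matrix.inv_smul _ t hdet, smul_apply, smul_eq_mul]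
    exact mul_nonneg (invOf_nonneg.2 ht0.le) (inv_one_sub_apply_nonneg hP hPnorm j i)

end LinftyOpNorm

lemma sub_mul_sum_le_sum_smul_one_sub_mulVec {M : Matrix ι ι ℝ} {σ : ℝ}
    (hcol : ∀ j, ∑ i, M i j ≤ σ) (t : ℝ) {y : ι → ℝ} (hy : ∀ i, 0 ≤ y i) :
    (t - σ) * ∑ i, y i ≤ ∑ i, ((t • 1 - M) *ᵥ y) i := by
  have hMy : ∑ i, (M *ᵥ y) i ≤ σ * ∑ i, y i := calc
    ∑ i, (M *ᵥ y) i = ∑ j, (∑ i, M i j) * y j := by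
      simp only [mulVec, dotProduct, Finset.sum_mul]
      exact Finset.sum_comm
    _ ≤ ∑ j, σ * y j := Finset.sum_le_sum fun j _ => mul_le_mul_of_nonneg_right (hcol j) (hy j)
    _ = σ * ∑ i, y i := (Finset.mul_sum ..).symm
  simp only [sub_mulVec, smul_mulVec, one_mulVec, Pi.sub_apply, Pi.smul_apply, smul_eq_mul,
    Finset.sum_sub_distrib, ← Finset.mul_sum]
  linarith

lemma sub_mul_sum_inv_smul_one_sub_mulVec_le {M : Matrix ι ι ℝ} {σ t : ℝ}
    (hM : ∀ i j, 0 ≤ M i j) (hσ : 0 ≤ σ) (hcol : ∀ j, ∑ i, M i j ≤ σ) (ht : σ < t)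
    {x : ι → ℝ} (hx : ∀ i, 0 ≤ x i) :
    (t - σ) * ∑ i, ((t • 1 - M)⁻¹ *ᵥ x) i ≤ ∑ i, x i := by
  obtain ⟨hdet, hinv⟩ := isUnit_det_smul_one_sub_and_inv_apply_nonneg hM hσ hcol ht
  have := sub_mul_sum_le_sum_smul_one_sub_mulVec hcol t (mulVec_apply_nonneg hinv hx)
  rwa [mulVec_mulVec, mul_nonsing_inv _ hdet, one_mulVec] at this

lemma inv_smul_one_sub_sub_inv_smul_one_sub {M : Matrix ι ι ℝ} {t s : ℝ}
    (ht : IsUnit (t • 1 - M).det) (hs : IsUnit (s • 1 - M).det) :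
    (t • 1 - M)⁻¹ - (s • 1 - M)⁻¹ = (s - t) • ((t • 1 - M)⁻¹ * (s • 1 - M)⁻¹) := by
  rw [nonsing_inv_eq_ringInverse, nonsing_inv_eq_ringInverse,
    Ring.inverse_sub_inverse (by simp only [isUnit_iff_isUnit_det, ht, hs]),
    sub_sub_sub_cancel_right, ← sub_smul, mul_smul_comm, mul_one, smul_mul_assoc]

end Matrix

variable {ι : Type*} [Fintype ι] [DecidableEq ι]

noncomputable def resolventMass (M : Matrix ι ι ℝ) (b : ι → ℝ) (t : ℝ) : ℝ :=
  ∑ i, ((t • 1 - M)⁻¹ *ᵥ b) i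

lemma resolventMass_sub_resolventMass {M : Matrix ι ι ℝ} {t s : ℝ} (b : ι → ℝ)
    (ht : IsUnit (t • 1 - M).det) (hs : IsUnit (s • 1 - M).det) :
    resolventMass M b t - resolventMass M b s =
      (s - t) * ∑ i, ((t • 1 - M)⁻¹ *ᵥ (s • 1 - M)⁻¹ *ᵥ b) i := by
  have hvec : (t • 1 - M)⁻¹ *ᵥ b - (s • 1 - M)⁻¹ *ᵥ b =
      (s - t) • ((t • 1 - M)⁻¹ *ᵥ (s • 1 - M)⁻¹ *ᵥ b) := by
    rw [← sub_mulVec, inv_smul_one_sub_sub_inv_smul_one_sub ht hs, smul_mulVec, mulVec_mulVec]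
  simp only [resolventMass, ← Finset.sum_sub_distrib, Finset.mul_sum]
  exact Finset.sum_congr rfl fun i _ => congrFun hvec i

section

variable {M : Matrix ι ι ℝ} {σ : ℝ} {b : ι → ℝ}

lemma resolventMass_antitoneOn (hM : ∀ i j, 0 ≤ M i j) (hσ : 0 ≤ σ)
    (hcol : ∀ j, ∑ i, M i j ≤ σ) (hb : ∀ i, 0 ≤ b i) : AntitoneOn (resolventMass M b) (Ioi σ) := by
  intro t ht s hs hts
  obtain ⟨hdet_t, hinv_t⟩ := isUnit_det_smul_one_sub_and_inv_apply_nonneg hM hσ hcol ht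
  obtain ⟨hdet_s, hinv_s⟩ := isUnit_det_smul_one_sub_and_inv_apply_nonneg hM hσ hcol hs
  have hS : 0 ≤ ∑ i, ((t • 1 - M)⁻¹ *ᵥ (s • 1 - M)⁻¹ *ᵥ b) i :=
    Finset.sum_nonneg fun i _ => mulVec_apply_nonneg hinv_t (mulVec_apply_nonneg hinv_s hb) i
  have hsub := resolventMass_sub_resolventMass b hdet_t hdet_s
  nlinarith [mul_nonneg (sub_nonneg.2 hts) hS]

lemma monotoneOn_sub_mul_resolventMass (hM : ∀ i j, 0 ≤ M i j) (hσ : 0 ≤ σ)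
    (hcol : ∀ j, ∑ i, M i j ≤ σ) (hb : ∀ i, 0 ≤ b i) :
    MonotoneOn (fun t => (t - σ) * resolventMass M b t) (Ioi σ) := by
  intro t ht s hs hts
  obtain ⟨hdet_t, -⟩ := isUnit_det_smul_one_sub_and_inv_apply_nonneg hM hσ hcol ht
  obtain ⟨hdet_s, hinv_s⟩ := isUnit_det_smul_one_sub_and_inv_apply_nonneg hM hσ hcol hs
  have hS := sub_mul_sum_inv_smul_one_sub_mulVec_le hM hσ hcol ht (mulVec_apply_nonneg hinv_s hb)
  have hsub := resolventMass_sub_resolventMass b hdet_t hdet_s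
  simp only [resolventMass] at hsub ⊢
  linear_combination (t - σ) * hsub + mul_le_mul_of_nonneg_left hS (sub_nonneg.2 hts)

end

lemma l1_eq_sum_of_nonneg {n : ℕ} {x : Fin n → ℝ} (hx : ∀ i, 0 ≤ x i) : l1 x = ∑ i, x i :=
  Finset.sum_congr rfl fun i _ => abs_of_nonneg (hx i)

lemma op1_nonneg {n : ℕ} (M : Matrix (Fin n) (Fin n) ℝ) : 0 ≤ op1 M :=
  Real.iSup_nonneg fun _ => Finset.sum_nonneg fun _ _ => abs_nonneg _

lemma sum_le_op1 {n : ℕ} (M : Matrix (Fin n) (Fin n) ℝ) (j : Fin n) : ∑ i, M i j ≤ op1 M :=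
  calc ∑ i, M i j ≤ ∑ i, |M i j| := Finset.sum_le_sum fun _ _ => le_abs_self _
    _ ≤ op1 M := le_ciSup (f := fun j => ∑ i, |M i j|) (Set.finite_range _).bddAbove j

theorem stmt_8_general {n : ℕ} (M : Matrix (Fin n) (Fin n) ℝ) (hM : ∀ i j, 0 ≤ M i j)
    (σ β : ℝ) (hσ : σ = op1 M) (hσ1 : σ < 1) (hβ : β = 1 - σ)
    (A : Matrix (Fin n) (Fin n) ℝ) (hA : A = (2 - σ) • (1 : Matrix (Fin n) (Fin n) ℝ) - M)
    (b : Fin n → ℝ) (hb : ∀ i, 0 ≤ b i) (μs : ℝ)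
    (hgneg : ∀ μ ∈ Ioc μs β, l1 ((A - μ • 1)⁻¹.mulVec b) - μ < 0) :
    AntitoneOn (fun μ => -μ / (l1 ((A - μ • 1)⁻¹.mulVec b) - μ)) (Ioc μs β) := by
  have hσ0 : 0 ≤ σ := hσ ▸ op1_nonneg M
  have hcol : ∀ j, ∑ i, M i j ≤ σ := hσ ▸ sum_le_op1 M
  have hshift : ∀ μ ≤ β, 2 - σ - μ ∈ Ioi σ := fun μ hμ => by
    rw [mem_Ioi]
    linarith
  have hl1 : ∀ μ ≤ β, l1 ((A - μ • 1)⁻¹ *ᵥ b) = resolventMass M b (2 - σ - μ) := by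
    intro μ hμ
    have hA_sub : A - μ • 1 = (2 - σ - μ) • 1 - M := by
      rw [hA, sub_smul (2 - σ)]
      abel
    rw [hA_sub, l1_eq_sum_of_nonneg (mulVec_apply_nonneg
      (isUnit_det_smul_one_sub_and_inv_apply_nonneg hM hσ0 hcol (hshift μ hμ)).2 hb)]
    rfl
  intro μ₁ hμ₁ μ₂ hμ₂ h12
  have hd₁ := hgneg μ₁ hμ₁
  have hd₂ := hgneg μ₂ hμ₂
  simp only [hl1 μ₁ hμ₁.2, hl1 μ₂ hμ₂.2] at hd₁ hd₂ ⊢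
  have hanti := resolventMass_antitoneOn hM hσ0 hcol hb (hshift μ₂ hμ₂.2) (hshift μ₁ hμ₁.2)
    (by linarith)
  have hmono := monotoneOn_sub_mul_resolventMass hM hσ0 hcol hb (hshift μ₂ hμ₂.2)
    (hshift μ₁ hμ₁.2) (by linarith)
  rw [← neg_sub μ₂, ← neg_sub μ₁, neg_div_neg_eq, neg_div_neg_eq,
    div_le_div_iff₀ (by linarith) (by linarith)]
  have hμ₁_le : μ₁ ≤ 2 * β - μ₂ := by linarith [hμ₁.2, hμ₂.2]
  nlinarith [mul_le_mul_of_nonneg_right hμ₁_le (sub_nonneg.2 hanti)]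

/-- Lemma 10: the function `g₂(μ) = -μ/g(μ)`, with `g(μ) = ‖(A-μI)⁻¹b‖₁ - μ`,
is monotonically decreasing on `(μ*, β]`. -/
theorem stmt_8 {n : ℕ} (M : Matrix (Fin n) (Fin n) ℝ) (hM : ∀ i j, 0 ≤ M i j)
    (σ β : ℝ) (hσ : σ = op1 M) (hσ1 : σ < 1) (hβ : β = 1 - σ)
    (A : Matrix (Fin n) (Fin n) ℝ) (hA : A = (2 - σ) • (1 : Matrix (Fin n) (Fin n) ℝ) - M)
    (b : Fin n → ℝ) (hb : ∀ i, 0 ≤ b i) (hbne : b ≠ 0) (hb1 : l1 b < β ^ 2)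
    (μs : ℝ) (hμs : μs ∈ Icc (0 : ℝ) β) (hfix : l1 ((A - μs • 1)⁻¹.mulVec b) = μs)
    (hgneg : ∀ μ ∈ Ioc μs β, l1 ((A - μ • 1)⁻¹.mulVec b) - μ < 0) :
    AntitoneOn (fun μ => -μ / (l1 ((A - μ • 1)⁻¹.mulVec b) - μ)) (Ioc μs β) :=
  stmt_8_general M hM σ β hσ hσ1 hβ A hA b hb μs hgneg
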